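/- Let (f_n) for n ≥ 0 be C^r diffeomorphisms of ℝ with |f_n'| < μ pointwise and ‖Df_n‖_{C^{r-1}} < C₀ for constants μ, C₀ > 1. Write f^n = f_{n-1} ∘ ⋯ ∘ f_0. Then there exists a constant C = C(C₀, r) ≥ 1 such that for every n ≥ 1, ‖Df^n‖_{C^{r-1}} < C·μ^{r(n-1)}. -/

import Mathlib

/-!
Write `f^{n+1} = f_n ∘ f^n`. By the chain rule and Leibniz' rule,
`D^{k+1} f^{n+1} = (f_n' ∘ f^n) · D^{k+1} f^n` plus terms that involve only derivatives of `f^n`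
of order at most `k`; by Faà di Bruno and induction on `k` these are `O(μ^{(k+1)n})`. Hence
`a_n = |D^{k+1} f^n x|` obeys `a_{n+1} ≤ μ a_n + B μ^{(k+1)n}`, and as `μ < μ^{k+1}` for `k ≥ 1`
this recursion gives `a_n ≤ K μ^{(k+1)n}`.
-/

/-- Composition `f^n = f_{n-1} ∘ ⋯ ∘ f_0`. -/
def compSeq (f : ℕ → ℝ → ℝ) : ℕ → ℝ → ℝ
  | 0 => id
  | n + 1 => f n ∘ compSeq f n

open Finset Nat

theorem contDiff_compSeq {N : WithTop ℕ∞} {f : ℕ → ℝ → ℝ} (hf : ∀ i, ContDiff ℝ N (f i)) :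
    ∀ n, ContDiff ℝ N (compSeq f n)
  | 0 => contDiff_id
  | n + 1 => (hf n).comp (contDiff_compSeq hf n)

theorem abs_iteratedDeriv_comp_le {f g : ℝ → ℝ} {m : ℕ} (hf : ContDiff ℝ m f)
    (hg : ContDiff ℝ m g) (x : ℝ) {C D : ℝ} (hC : ∀ i ≤ m, |iteratedDeriv i f (g x)| ≤ C)
    (hD : ∀ i, 1 ≤ i → i ≤ m → |iteratedDeriv i g x| ≤ D ^ i) :
    |iteratedDeriv m (f ∘ g) x| ≤ m ! * C * D ^ m := by
  simp only [← Real.norm_eq_abs, ← norm_iteratedFDeriv_eq_norm_iteratedDeriv] at hC hD ⊢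
  exact norm_iteratedFDeriv_comp_le hf hg le_rfl x hC hD

theorem abs_iteratedDeriv_succ_comp_le {f g : ℝ → ℝ} {k : ℕ} (hf : ContDiff ℝ (k + 1) f)
    (hg : ContDiff ℝ (k + 1) g) (x : ℝ) :
    |iteratedDeriv (k + 1) (f ∘ g) x| ≤ |deriv f (g x)| * |iteratedDeriv (k + 1) g x| +
      ∑ i ∈ range k, k.choose (i + 1) * |iteratedDeriv (i + 1) (deriv f ∘ g) x| *
        |iteratedDeriv (k - i) g x| := by
  have hf' : ContDiff ℝ k (deriv f) := (contDiff_succ_iff_deriv.mp hf).2.2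
  have hg' : ContDiff ℝ k (deriv g) := (contDiff_succ_iff_deriv.mp hg).2.2
  have hchain : deriv (f ∘ g) = (deriv f ∘ g) * deriv g := by
    ext y
    exact deriv_comp y (hf.differentiable (by simp) _) (hg.differentiable (by simp) _)
  rw [iteratedDeriv_succ', hchain,
    iteratedDeriv_mul (hf'.comp (hg.of_le (by simp))).contDiffAt hg'.contDiffAt,
    sum_range_succ']
  refine (abs_add_le _ _).trans ?_
  rw [add_comm]
  gcongr
  · simp [← iteratedDeriv_succ']
  · refine (abs_sum_le_sum_abs _ _).trans (le_of_eq (sum_congr rfl fun i hi => ?_))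
    have hik : k - (i + 1) + 1 = k - i := by have := mem_range.mp hi; omega
    rw [← iteratedDeriv_succ', hik, abs_mul, abs_mul, Nat.abs_cast]

theorem le_mul_pow_of_le_mul_add {a : ℕ → ℝ} {μ ρ B K : ℝ} (hμ : 0 ≤ μ) (hρ : 0 ≤ ρ)
    (hK : μ * K + B ≤ K * ρ) (h0 : a 0 ≤ K) (hstep : ∀ n, a (n + 1) ≤ μ * a n + B * ρ ^ n) :
    ∀ n, a n ≤ K * ρ ^ n
  | 0 => by simpa using h0
  | n + 1 => calc
      a (n + 1) ≤ μ * (K * ρ ^ n) + B * ρ ^ n := (hstep n).trans <| by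
        gcongr; exact le_mul_pow_of_le_mul_add hμ hρ hK h0 hstep n
      _ = (μ * K + B) * ρ ^ n := by ring
      _ ≤ K * ρ * ρ ^ n := by gcongr
      _ = K * ρ ^ (n + 1) := by ring

theorem abs_iteratedDeriv_deriv_comp_le {f g : ℝ → ℝ} {m : ℕ} {C₀ K D x : ℝ}
    (hf : ContDiff ℝ (m + 1) f) (hg : ContDiff ℝ m g)
    (hfC : ∀ j, 1 ≤ j → j ≤ m + 1 → |iteratedDeriv j f (g x)| ≤ C₀) (hK : 1 ≤ K) (hD : 0 ≤ D)
    (hgK : ∀ j, 1 ≤ j → j ≤ m → |iteratedDeriv j g x| ≤ K * D ^ j) :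
    |iteratedDeriv m (deriv f ∘ g) x| ≤ m ! * C₀ * (K * D) ^ m := by
  refine abs_iteratedDeriv_comp_le (contDiff_succ_iff_deriv.mp hf).2.2 hg x (fun j hj => ?_)
    (fun j hj1 hj => ?_)
  · rw [← iteratedDeriv_succ']
    exact hfC (j + 1) (by omega) (by omega)
  · calc |iteratedDeriv j g x| ≤ K * D ^ j := hgK j hj1 hj
      _ ≤ K ^ j * D ^ j := by gcongr; exact le_self_pow₀ hK (by omega)
      _ = (K * D) ^ j := (mul_pow _ _ _).symm

theorem abs_iteratedDeriv_succ_comp_le_of_bounds {f g : ℝ → ℝ} {k : ℕ} {μ C₀ K D : ℝ} {x : ℝ}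
    (hf : ContDiff ℝ (k + 1) f) (hg : ContDiff ℝ (k + 1) g)
    (hfμ : |deriv f (g x)| ≤ μ) (hfC : ∀ j, 1 ≤ j → j ≤ k + 1 → |iteratedDeriv j f (g x)| ≤ C₀)
    (hK : 1 ≤ K) (hD : 0 ≤ D) (hgK : ∀ j, 1 ≤ j → j ≤ k → |iteratedDeriv j g x| ≤ K * D ^ j) :
    |iteratedDeriv (k + 1) (f ∘ g) x| ≤
      μ * |iteratedDeriv (k + 1) g x| + k * (2 ^ k * k ! * C₀ * K ^ (k + 1)) * D ^ (k + 1) := by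
  have hC₀ : 0 ≤ C₀ := (abs_nonneg _).trans (hfC 1 le_rfl (by omega))
  have hterm : ∀ i ∈ range k, k.choose (i + 1) * |iteratedDeriv (i + 1) (deriv f ∘ g) x| *
      |iteratedDeriv (k - i) g x| ≤ 2 ^ k * k ! * C₀ * K ^ (k + 1) * D ^ (k + 1) := by
    intro i hi
    have hik : i + 1 ≤ k := mem_range.mp hi
    have hfaa : |iteratedDeriv (i + 1) (deriv f ∘ g) x| ≤ (i + 1) ! * C₀ * (K * D) ^ (i + 1) :=
      abs_iteratedDeriv_deriv_comp_le (hf.of_le (by exact_mod_cast (by omega : i + 2 ≤ k + 1)))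
        (hg.of_le (by exact_mod_cast (by omega : i + 1 ≤ k + 1)))
        (fun j hj1 hj => hfC j hj1 (by omega)) hK hD (fun j hj1 hj => hgK j hj1 (by omega))
    calc (k.choose (i + 1) : ℝ) * |iteratedDeriv (i + 1) (deriv f ∘ g) x| *
          |iteratedDeriv (k - i) g x|
        ≤ 2 ^ k * ((i + 1) ! * C₀ * (K * D) ^ (i + 1)) * (K * D ^ (k - i)) := by
          gcongr
          · exact_mod_cast Nat.choose_le_two_pow k (i + 1)
          · exact hgK (k - i) (by omega) (by omega)
      _ = 2 ^ k * (i + 1) ! * C₀ * K ^ (i + 2) * D ^ (k + 1) := by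
          rw [show k + 1 = (i + 1) + (k - i) by omega]; ring
      _ ≤ 2 ^ k * k ! * C₀ * K ^ (k + 1) * D ^ (k + 1) := by
          have hfac : ((i + 1) ! : ℝ) ≤ k ! := by exact_mod_cast Nat.factorial_le hik
          have hpow : K ^ (i + 2) ≤ K ^ (k + 1) := pow_le_pow_right₀ hK (by omega)
          gcongr
  calc |iteratedDeriv (k + 1) (f ∘ g) x|
      ≤ |deriv f (g x)| * |iteratedDeriv (k + 1) g x| +
        ∑ i ∈ range k, k.choose (i + 1) * |iteratedDeriv (i + 1) (deriv f ∘ g) x| *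
          |iteratedDeriv (k - i) g x| := abs_iteratedDeriv_succ_comp_le hf hg x
    _ ≤ μ * |iteratedDeriv (k + 1) g x| +
        ∑ _i ∈ range k, 2 ^ k * k ! * C₀ * K ^ (k + 1) * D ^ (k + 1) :=
          add_le_add (by gcongr) (sum_le_sum hterm)
    _ = μ * |iteratedDeriv (k + 1) g x| + k * (2 ^ k * k ! * C₀ * K ^ (k + 1)) * D ^ (k + 1) := by
          rw [sum_const, card_range, nsmul_eq_mul]; ring

/-- The value at `k + 1` is at least `T / (μ - 1)`, where `T = 2^k k! C₀ K_k^{k+1}` bounds each lower-order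
term of the Leibniz expansion; Bernoulli's inequality then lets `K_{k+1} μ^{k+1}` absorb them. -/
noncomputable def compSeqConst (μ C₀ : ℝ) : ℕ → ℝ
  | 0 => 1
  | k + 1 => max (compSeqConst μ C₀ k)
      (2 ^ k * k ! * C₀ * compSeqConst μ C₀ k ^ (k + 1) / (μ - 1))

section compSeqConst

variable {μ C₀ : ℝ}

theorem compSeqConst_mono : Monotone (compSeqConst μ C₀) :=
  monotone_nat_of_le_succ fun _ => le_max_left _ _

theorem one_le_compSeqConst (k : ℕ) : 1 ≤ compSeqConst μ C₀ k :=
  compSeqConst_mono (Nat.zero_le k)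

theorem compSeqConst_succ_absorbs (hμ : 1 < μ) (k : ℕ) :
    μ * compSeqConst μ C₀ (k + 1) + k * (2 ^ k * k ! * C₀ * compSeqConst μ C₀ k ^ (k + 1)) ≤
      compSeqConst μ C₀ (k + 1) * μ ^ (k + 1) := by
  set K := compSeqConst μ C₀ (k + 1)
  have hK : 0 ≤ K := zero_le_one.trans (one_le_compSeqConst _)
  have hT : 2 ^ k * k ! * C₀ * compSeqConst μ C₀ k ^ (k + 1) ≤ K * (μ - 1) :=
    (div_le_iff₀ (by linarith)).mp (le_max_right _ _)
  have hbern : 1 + k * (μ - 1) ≤ μ ^ k := one_add_mul_sub_le_pow (by linarith) k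
  have hk : (0 : ℝ) ≤ k * (μ - 1) * K := by have := hμ.le; positivity
  calc μ * K + k * (2 ^ k * k ! * C₀ * compSeqConst μ C₀ k ^ (k + 1))
      ≤ μ * K + k * (K * (μ - 1)) := by gcongr
    _ ≤ μ * K * (1 + k * (μ - 1)) := by nlinarith
    _ ≤ μ * K * μ ^ k := by gcongr
    _ = K * μ ^ (k + 1) := by ring

end compSeqConst

section compSeq

variable {r : ℕ} {μ C₀ : ℝ} {f : ℕ → ℝ → ℝ} (hμ : 1 < μ) (hf : ∀ i, ContDiff ℝ (r : ℕ∞) (f i))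
  (hfμ : ∀ i x, |deriv (f i) x| ≤ μ)
  (hfC : ∀ i j, 1 ≤ j → j ≤ r → ∀ x, |iteratedDeriv j (f i) x| ≤ C₀)
include hμ hf hfμ hfC

theorem abs_iteratedDeriv_succ_compSeq_le {k : ℕ} (hk : k + 1 ≤ r)
    (ih : ∀ j, 1 ≤ j → j ≤ k → ∀ n x,
      |iteratedDeriv j (compSeq f n) x| ≤ compSeqConst μ C₀ k * (μ ^ n) ^ j) (n : ℕ) (x : ℝ) :
    |iteratedDeriv (k + 1) (compSeq f n) x| ≤ compSeqConst μ C₀ (k + 1) * (μ ^ n) ^ (k + 1) := by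
  have hkr : ((k + 1 : ℕ) : WithTop ℕ∞) ≤ (r : ℕ∞) := by exact_mod_cast hk
  rw [pow_right_comm]
  refine le_mul_pow_of_le_mul_add (a := fun n => |iteratedDeriv (k + 1) (compSeq f n) x|)
    (by linarith) (by positivity) (compSeqConst_succ_absorbs hμ k) ?_ (fun n => ?_) n
  · change |iteratedDeriv (k + 1) id x| ≤ _
    rw [iteratedDeriv_id, if_neg (succ_ne_zero k)]
    have := one_le_compSeqConst (μ := μ) (C₀ := C₀) (k + 1)
    split_ifs <;> simp only [abs_one, abs_zero] <;> linarith
  · have hstep := abs_iteratedDeriv_succ_comp_le_of_bounds ((hf n).of_le hkr)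
      ((contDiff_compSeq hf n).of_le hkr) (hfμ n _)
      (fun j hj1 hj => hfC n j hj1 (hj.trans hk) _) (one_le_compSeqConst k) (by positivity)
      (fun j hj1 hj => ih j hj1 hj n x)
    rwa [pow_right_comm] at hstep

theorem abs_iteratedDeriv_compSeq_le {k : ℕ} (hk : k ≤ r) :
    ∀ j, 1 ≤ j → j ≤ k → ∀ n x,
      |iteratedDeriv j (compSeq f n) x| ≤ compSeqConst μ C₀ k * (μ ^ n) ^ j := by
  induction k with
  | zero => intro j hj1 hj; omega
  | succ k ih =>
    have ih := ih (by omega)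
    intro j hj1 hj n x
    rcases (show j ≤ k ∨ j = k + 1 by omega) with hjk | rfl
    · have hμ0 : 0 ≤ μ := by linarith
      exact (ih j hj1 hjk n x).trans
        (mul_le_mul_of_nonneg_right (compSeqConst_mono (le_succ k)) (by positivity))
    · exact abs_iteratedDeriv_succ_compSeq_le hμ hf hfμ hfC hk ih n x

end compSeq

theorem stmt_10_general (r : ℕ) (C₀ μ : ℝ) (hμ : 1 < μ) :
    ∃ C : ℝ, 1 ≤ C ∧ ∀ f : ℕ → ℝ → ℝ,
      (∀ i, ContDiff ℝ (r : ℕ∞) (f i)) →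
      (∀ i, Function.Bijective (f i)) →
      (∀ i x, |deriv (f i) x| < μ) →
      (∀ i k, 1 ≤ k → k ≤ r → ∀ x, |iteratedDeriv k (f i) x| < C₀) →
      ∀ n, 1 ≤ n → ∀ k, 1 ≤ k → k ≤ r → ∀ x,
        |iteratedDeriv k (compSeq f n) x| < C * μ ^ (r * (n - 1)) := by
  set K := compSeqConst μ C₀ r
  have hK : 1 ≤ K := one_le_compSeqConst r
  have hμr : 1 ≤ μ ^ r := one_le_pow₀ hμ.le
  refine ⟨2 * K * μ ^ r, by nlinarith, fun f hf _ hfμ hfC n hn k hk1 hk x => ?_⟩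
  obtain ⟨m, rfl⟩ : ∃ m, n = m + 1 := ⟨n - 1, by omega⟩
  have hexp : (m + 1) * k ≤ r + r * (m + 1 - 1) := by
    rw [Nat.add_sub_cancel]; nlinarith
  calc |iteratedDeriv k (compSeq f (m + 1)) x|
      ≤ K * (μ ^ (m + 1)) ^ k :=
        abs_iteratedDeriv_compSeq_le hμ hf (fun i x => (hfμ i x).le)
          (fun i j hj1 hj x => (hfC i j hj1 hj x).le) le_rfl k hk1 hk (m + 1) x
    _ ≤ K * μ ^ r * μ ^ (r * (m + 1 - 1)) := by
        rw [← pow_mul, mul_assoc, ← pow_add]; gcongr; exact hμ.le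
    _ < 2 * (K * μ ^ r * μ ^ (r * (m + 1 - 1))) := by
        have := hμ.le
        exact lt_two_mul_self (by positivity)
    _ = 2 * K * μ ^ r * μ ^ (r * (m + 1 - 1)) := by ring

/-- Compositions of 1D diffeomorphisms: if `|f_n'| < μ` and
`‖Df_n‖_{C^{r-1}} < C₀`, then `‖Df^n‖_{C^{r-1}} < C μ^{r(n-1)}` for `C = C(C₀, r)`. -/
theorem stmt_10 (r : ℕ) (hr : 1 ≤ r) (C₀ μ : ℝ) (hμ : 1 < μ) (hC₀ : 1 < C₀) :
    ∃ C : ℝ, 1 ≤ C ∧ ∀ f : ℕ → ℝ → ℝ,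
      (∀ i, ContDiff ℝ (r : ℕ∞) (f i)) →
      (∀ i, Function.Bijective (f i)) →
      (∀ i x, |deriv (f i) x| < μ) →
      (∀ i k, 1 ≤ k → k ≤ r → ∀ x, |iteratedDeriv k (f i) x| < C₀) →
      ∀ n, 1 ≤ n → ∀ k, 1 ≤ k → k ≤ r → ∀ x,
        |iteratedDeriv k (compSeq f n) x| < C * μ ^ (r * (n - 1)) :=
  stmt_10_general r C₀ μ hμ
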